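/- There exists a universal constant C > 0 with the following property (Hardy-type inequality on hyperboloids). Let φ : ℝ × ℝ³ → ℂ be a smooth function that is spatially supported inside the forward light cone, i.e. φ(t,x) = 0 whenever |x| ≥ t − 1. Then for every τ ≥ 2, ‖ |x|^{-1} φ ‖_{L²(Σ_τ)} ≤ C · Σ_{i=1}^{3} ‖ t^{-1} L_i φ ‖_{L²(Σ_τ)}, i.e. ( ∫_{ℝ³} |x|^{-2} |φ(√(τ²+|x|²),x)|² dx )^{1/2} ≤ C Σ_{i=1}^{3} ( ∫_{ℝ³} (τ²+|x|²)^{-1} |(L_i φ)(√(τ²+|x|²),x)|² dx )^{1/2}. -/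

import Mathlib

open scoped BigOperators
open MeasureTheory

noncomputable section

abbrev Spc : Type := EuclideanSpace ℝ (Fin 3)

def dtD (φ : ℝ × Spc → ℂ) (p : ℝ × Spc) : ℂ := fderiv ℝ φ p (1, 0)

def dxD (i : Fin 3) (φ : ℝ × Spc → ℂ) (p : ℝ × Spc) : ℂ :=
  fderiv ℝ φ p (0, EuclideanSpace.single i 1)

/-- Lorentz boost `L_i φ = t ∂_{x^i} φ + x^i ∂_t φ`. -/
def Lb (i : Fin 3) (φ : ℝ × Spc → ℂ) (p : ℝ × Spc) : ℂ :=
  (p.1 : ℂ) * dxD i φ p + (p.2 i : ℂ) * dtD φ p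

/-! On `Σ_τ` put `u(x) = φ(√(τ² + |x|²), x)`. The chain rule gives `∂ᵢu = t⁻¹ Lᵢφ`, and the cone
condition makes `u` vanish for `|x| ≥ (τ² - 1) / 2`. The estimate is therefore the classical Hardy
inequality `∫ |u|² / |x|² ≤ 4 ∫ |∇u|²` on `ℝ³`, with constant `(2 / (d - 2))²` in dimension `d`.
In polar coordinates it reduces, ray by ray, to `∫₀^∞ rᵏ |w|² ≤ (2 / (k + 1))² ∫₀^∞ rᵏ⁺² |w'|²`,
which follows by integrating `(rᵏ⁺¹ |w|²)' = (k + 1) rᵏ |w|² + 2 rᵏ⁺¹ ⟪w, w'⟫` and absorbing the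
cross term by AM-GM. -/

open Set MeasureTheory Metric Module
open scoped ENNReal RealInnerProductSpace

section HalfLine

variable {F : Type*} [NormedAddCommGroup F] [InnerProductSpace ℝ F]

theorem intervalIntegral_pow_mul_norm_sq_le {w w' : ℝ → F} (hw : ∀ r, HasDerivAt w (w' r) r)
    (hw' : Continuous w') (k : ℕ) {R : ℝ} (hR : 0 ≤ R) (hwR : w R = 0) :
    ∫ r in (0 : ℝ)..R, r ^ k * ‖w r‖ ^ 2 ≤
      (2 / (k + 1)) ^ 2 * ∫ r in (0 : ℝ)..R, r ^ (k + 2) * ‖w' r‖ ^ 2 := by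
  have hwc : Continuous w := continuous_iff_continuousAt.2 fun r => (hw r).continuousAt
  have hii : ∀ g : ℝ → ℝ, Continuous g → IntervalIntegrable g volume 0 R :=
    fun g hg => hg.intervalIntegrable 0 R
  set m : ℝ := k + 1 with hm_def
  have hm : 0 < m := by positivity
  set I := ∫ r in (0 : ℝ)..R, r ^ k * ‖w r‖ ^ 2
  set J := ∫ r in (0 : ℝ)..R, r ^ (k + 2) * ‖w' r‖ ^ 2
  -- the integrand is the derivative of `r ^ (k + 1) * ‖w r‖ ^ 2`, which vanishes at `0` and `R`
  have hFTC :
      ∫ r in (0 : ℝ)..R, (m * (r ^ k * ‖w r‖ ^ 2) + r ^ (k + 1) * (2 * ⟪w r, w' r⟫)) = 0 := by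
    rw [intervalIntegral.integral_eq_sub_of_hasDerivAt (f := fun r => r ^ (k + 1) * ‖w r‖ ^ 2)
      (fun r _ => ((hasDerivAt_pow (k + 1) r).fun_mul (hw r).norm_sq).congr_deriv ?_)
      (hii _ (by fun_prop))]
    · simp [hwR]
    · rw [Nat.add_sub_cancel, hm_def]; push_cast; ring
  have hpt : ∀ r ∈ Icc (0 : ℝ) R, -(r ^ (k + 1) * (2 * ⟪w r, w' r⟫)) ≤
      m / 2 * (r ^ k * ‖w r‖ ^ 2) + 2 / m * (r ^ (k + 2) * ‖w' r‖ ^ 2) := by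
    intro r ⟨hr, _⟩
    have hCS : -⟪w r, w' r⟫ ≤ ‖w r‖ * ‖w' r‖ := (neg_le_abs _).trans (abs_real_inner_le_norm _ _)
    have hAMGM : 0 ≤ r ^ k * (m / 2 * (‖w r‖ - 2 * r * ‖w' r‖ / m) ^ 2) := by positivity
    have : r ^ k * (m / 2 * (‖w r‖ - 2 * r * ‖w' r‖ / m) ^ 2) =
        m / 2 * (r ^ k * ‖w r‖ ^ 2) + 2 / m * (r ^ (k + 2) * ‖w' r‖ ^ 2) -
          2 * r ^ (k + 1) * (‖w r‖ * ‖w' r‖) := by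
      field_simp; ring
    nlinarith [mul_le_mul_of_nonneg_left hCS (by positivity : 0 ≤ r ^ (k + 1))]
  have hmono := intervalIntegral.integral_mono_on (μ := volume) hR
    (hii _ (by fun_prop)) (hii _ (by fun_prop)) hpt
  rw [intervalIntegral.integral_add (hii _ (by fun_prop)) (hii _ (by fun_prop)),
    intervalIntegral.integral_const_mul] at hFTC
  rw [intervalIntegral.integral_neg, intervalIntegral.integral_add (hii _ (by fun_prop))
      (hii _ (by fun_prop)), intervalIntegral.integral_const_mul,
    intervalIntegral.integral_const_mul] at hmono
  have : m / 2 * I ≤ 2 / m * J := by linarith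
  calc I = 2 / m * (m / 2 * I) := by field_simp
    _ ≤ 2 / m * (2 / m * J) := by gcongr
    _ = (2 / m) ^ 2 * J := by ring

theorem setLIntegral_Ioi_ofReal_eq_intervalIntegral {g : ℝ → ℝ} (hg : Continuous g) {R : ℝ}
    (hR : 0 ≤ R) (hg0 : ∀ r ∈ Ioi (0 : ℝ), 0 ≤ g r) (hgR : ∀ r, R < r → g r = 0) :
    ∫⁻ r in Ioi 0, ENNReal.ofReal (g r) = ENNReal.ofReal (∫ r in (0 : ℝ)..R, g r) := by
  have hR' : ∀ r ∈ Ioi (0 : ℝ) \ Ioc 0 R, g r = 0 := fun r hr =>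
    hgR r (by simpa [mem_Ioi.1 hr.1] using hr.2)
  rw [intervalIntegral.integral_of_le hR,
    ← setIntegral_eq_of_subset_of_forall_sdiff_eq_zero measurableSet_Ioi Ioc_subset_Ioi_self hR',
    ofReal_integral_eq_lintegral_ofReal
      (hg.integrableOn_Ioc.of_forall_sdiff_eq_zero measurableSet_Ioi hR')
      (ae_restrict_of_forall_mem measurableSet_Ioi hg0)]

theorem lintegral_Ioi_pow_mul_norm_sq_le {w : ℝ → F} (hw : ContDiff ℝ 1 w) (k : ℕ) {R : ℝ}
    (hwR : ∀ r, R < r → w r = 0) :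
    ∫⁻ r in Ioi 0, ENNReal.ofReal (r ^ k * ‖w r‖ ^ 2) ≤
      ENNReal.ofReal ((2 / (k + 1)) ^ 2) *
        ∫⁻ r in Ioi 0, ENNReal.ofReal (r ^ (k + 2) * ‖deriv w r‖ ^ 2) := by
  set S := max R 0 + 1
  have hS : 0 ≤ S := by positivity
  have hwS : ∀ r, S ≤ r → w r = 0 := fun r hr => hwR r (by grind)
  have hw'S : ∀ r, S < r → deriv w r = 0 := fun r hr => by
    rw [(Filter.eventuallyEq_of_mem (Ioi_mem_nhds hr) fun s hs => hwS s (le_of_lt hs)).deriv_eq,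
      deriv_const]
  have hw' : Continuous (deriv w) := hw.continuous_deriv le_rfl
  rw [setLIntegral_Ioi_ofReal_eq_intervalIntegral (by fun_prop) hS
      (fun r (hr : 0 < r) => by positivity) fun r hr => by simp [hwS r hr.le],
    setLIntegral_Ioi_ofReal_eq_intervalIntegral (by fun_prop) hS
      (fun r (hr : 0 < r) => by positivity) fun r hr => by simp [hw'S r hr],
    ← ENNReal.ofReal_mul (by positivity)]
  exact ENNReal.ofReal_le_ofReal <| intervalIntegral_pow_mul_norm_sq_le
    (fun r => (hw.differentiable one_ne_zero r).hasDerivAt) hw' k hS (hwS S le_rfl)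

end HalfLine

theorem lintegral_volumeIoiPow (n : ℕ) {f : ℝ → ℝ≥0∞} (hf : Measurable f) :
    ∫⁻ r, f r ∂(Measure.volumeIoiPow n) = ∫⁻ r in Ioi 0, ENNReal.ofReal (r ^ n) * f r := by
  rw [Measure.volumeIoiPow, lintegral_withDensity_eq_lintegral_mul _
      (measurable_subtype_coe.pow_const n).ennreal_ofReal
      (g := fun r : Ioi (0 : ℝ) => f r) (hf.comp measurable_subtype_coe)]
  exact lintegral_subtype_comap measurableSet_Ioi fun r => ENNReal.ofReal (r ^ n) * f r

section Polar

variable {E : Type*} [NormedAddCommGroup E] [NormedSpace ℝ E] [MeasurableSpace E] [BorelSpace E]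
  [FiniteDimensional ℝ E] [Nontrivial E] (μ : Measure E) [μ.IsAddHaarMeasure]

theorem lintegral_eq_lintegral_sphere_lintegral_Ioi {f : E → ℝ≥0∞} (hf : Measurable f) :
    ∫⁻ x, f x ∂μ = ∫⁻ ω : sphere (0 : E) 1, (∫⁻ r in Ioi (0 : ℝ),
      ENNReal.ofReal (r ^ (finrank ℝ E - 1)) * f (r • (ω : E))) ∂μ.toSphere := by
  have hfp : Measurable fun p : sphere (0 : E) 1 × Ioi (0 : ℝ) => f ((p.2 : ℝ) • (p.1 : E)) :=
    hf.comp (by fun_prop)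
  calc ∫⁻ x, f x ∂μ = ∫⁻ x : ({0}ᶜ : Set E), f x ∂(μ.comap Subtype.val) := by
        rw [lintegral_subtype_comap (measurableSet_singleton 0).compl, restrict_compl_singleton]
    _ = ∫⁻ x : ({0}ᶜ : Set E), (fun p : sphere (0 : E) 1 × Ioi (0 : ℝ) => f ((p.2 : ℝ) • (p.1 : E)))
          (homeomorphUnitSphereProd E x) ∂(μ.comap Subtype.val) := by
        refine lintegral_congr fun x => ?_
        simp [smul_inv_smul₀ (norm_ne_zero_iff.2 x.2)]
    _ = ∫⁻ p, f ((p.2 : ℝ) • (p.1 : E)) ∂(μ.toSphere.prod (.volumeIoiPow (finrank ℝ E - 1))) :=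
        μ.measurePreserving_homeomorphUnitSphereProd.lintegral_comp hfp
    _ = _ := by
        rw [lintegral_prod _ hfp.aemeasurable]
        exact lintegral_congr fun ω => lintegral_volumeIoiPow _
          (hf.comp (measurable_id.smul_const (ω : E)))

end Polar

theorem OrthonormalBasis.opNorm_sq_le_sum_norm_apply_sq {ι E F : Type*} [Fintype ι]
    [NormedAddCommGroup E] [InnerProductSpace ℝ E] [NormedAddCommGroup F] [NormedSpace ℝ F]
    (b : OrthonormalBasis ι ℝ E) (L : E →L[ℝ] F) : ‖L‖ ^ 2 ≤ ∑ i, ‖L (b i)‖ ^ 2 := by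
  have hL : ‖L‖ ≤ √(∑ i, ‖L (b i)‖ ^ 2) := L.opNorm_le_bound (Real.sqrt_nonneg _) fun v =>
    calc ‖L v‖ = ‖∑ i, ⟪b i, v⟫ • L (b i)‖ := by
          conv_lhs => rw [← b.sum_repr' v]
          simp only [map_sum, map_smul]
      _ ≤ ∑ i, |⟪b i, v⟫| * ‖L (b i)‖ := (norm_sum_le _ _).trans_eq <| by
          simp only [norm_smul, Real.norm_eq_abs]
      _ ≤ √(∑ i, |⟪b i, v⟫| ^ 2) * √(∑ i, ‖L (b i)‖ ^ 2) :=
          Real.sum_mul_le_sqrt_mul_sqrt _ _ _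
      _ = √(∑ i, ‖L (b i)‖ ^ 2) * ‖v‖ := by
          rw [mul_comm]; simp only [sq_abs, b.sum_sq_inner_right, Real.sqrt_sq (norm_nonneg v)]
  calc ‖L‖ ^ 2 ≤ √(∑ i, ‖L (b i)‖ ^ 2) ^ 2 := by gcongr
    _ = ∑ i, ‖L (b i)‖ ^ 2 := Real.sq_sqrt (by positivity)

theorem Real.sqrt_sum_le_sum_sqrt {ι : Type*} (s : Finset ι) {f : ι → ℝ} (hf : ∀ i ∈ s, 0 ≤ f i) :
    √(∑ i ∈ s, f i) ≤ ∑ i ∈ s, √(f i) := by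
  refine (Real.sqrt_le_left (Finset.sum_nonneg fun i _ => Real.sqrt_nonneg _)).2 ?_
  calc ∑ i ∈ s, f i = ∑ i ∈ s, √(f i) ^ 2 :=
        Finset.sum_congr rfl fun i hi => (Real.sq_sqrt (hf i hi)).symm
    _ ≤ (∑ i ∈ s, √(f i)) ^ 2 := Finset.sum_sq_le_sq_sum_of_nonneg fun i _ => Real.sqrt_nonneg _

theorem integral_le_mul_integral_of_lintegral_le {α : Type*} [MeasurableSpace α] {μ : Measure α}
    {f g : α → ℝ} {c : ℝ} (hc : 0 ≤ c) (hf : 0 ≤ᵐ[μ] f) (hfm : AEStronglyMeasurable f μ)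
    (hg : Integrable g μ) (hg0 : 0 ≤ᵐ[μ] g)
    (h : ∫⁻ x, ENNReal.ofReal (f x) ∂μ ≤ ENNReal.ofReal c * ∫⁻ x, ENNReal.ofReal (g x) ∂μ) :
    ∫ x, f x ∂μ ≤ c * ∫ x, g x ∂μ := by
  rw [integral_eq_lintegral_of_nonneg_ae hf hfm, integral_eq_lintegral_of_nonneg_ae hg0 hg.1,
    ← ENNReal.toReal_ofReal hc, ← ENNReal.toReal_mul]
  exact ENNReal.toReal_mono (ENNReal.mul_ne_top ENNReal.ofReal_ne_top hg.lintegral_lt_top.ne) h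

section Hardy

variable {E F : Type*} [NormedAddCommGroup E] [NormedSpace ℝ E] [NormedAddCommGroup F]
  [InnerProductSpace ℝ F]

theorem lintegral_Ioi_inv_norm_sq_mul_norm_sq_smul_le (k : ℕ) {u : E → F} (hu : ContDiff ℝ 1 u)
    {R : ℝ} (hu0 : ∀ x, R < ‖x‖ → u x = 0) {ω : E} (hω : ‖ω‖ = 1) :
    ∫⁻ r in Ioi 0, ENNReal.ofReal (r ^ (k + 2)) * ENNReal.ofReal (‖r • ω‖⁻¹ ^ 2 * ‖u (r • ω)‖ ^ 2) ≤
      ENNReal.ofReal ((2 / (k + 1)) ^ 2) *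
        ∫⁻ r in Ioi 0,
          ENNReal.ofReal (r ^ (k + 2)) * ENNReal.ofReal (‖fderiv ℝ u (r • ω)‖ ^ 2) := by
  have hderiv : ∀ r : ℝ, deriv (fun r : ℝ => u (r • ω)) r = fderiv ℝ u (r • ω) ω := fun r => by
    have h := (hu.differentiable one_ne_zero _).hasFDerivAt.comp_hasDerivAt r
      ((hasDerivAt_id r).smul_const ω)
    rw [one_smul] at h
    exact h.deriv
  calc ∫⁻ r in Ioi 0, ENNReal.ofReal (r ^ (k + 2)) *
          ENNReal.ofReal (‖r • ω‖⁻¹ ^ 2 * ‖u (r • ω)‖ ^ 2)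
      = ∫⁻ r in Ioi 0, ENNReal.ofReal (r ^ k * ‖u (r • ω)‖ ^ 2) := by
        refine setLIntegral_congr_fun measurableSet_Ioi fun r (hr : 0 < r) => ?_
        rw [← ENNReal.ofReal_mul (by positivity), norm_smul, hω, Real.norm_of_nonneg hr.le]
        congr 1
        field_simp
        ring
    _ ≤ ENNReal.ofReal ((2 / (k + 1)) ^ 2) *
          ∫⁻ r in Ioi 0, ENNReal.ofReal (r ^ (k + 2) * ‖deriv (fun r : ℝ => u (r • ω)) r‖ ^ 2) :=
        lintegral_Ioi_pow_mul_norm_sq_le (hu.comp (by fun_prop)) k (R := R) fun r hr => hu0 _ <| by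
          rw [norm_smul, hω, mul_one, Real.norm_eq_abs]
          exact hr.trans_le (le_abs_self r)
    _ ≤ _ := by
        gcongr 1
        refine setLIntegral_mono' measurableSet_Ioi fun r (hr : 0 < r) => ?_
        rw [← ENNReal.ofReal_mul (by positivity), hderiv]
        gcongr
        simpa [hω] using (fderiv ℝ u (r • ω)).le_opNorm ω

theorem integral_inv_norm_sq_mul_norm_sq_le [MeasurableSpace E] [BorelSpace E]
    [FiniteDimensional ℝ E] (μ : Measure E) [μ.IsAddHaarMeasure] {k : ℕ}
    (hE : finrank ℝ E = k + 3) {u : E → F} (hu : ContDiff ℝ 1 u) (hsupp : HasCompactSupport u) :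
    ∫ x, ‖x‖⁻¹ ^ 2 * ‖u x‖ ^ 2 ∂μ ≤ (2 / (k + 1)) ^ 2 * ∫ x, ‖fderiv ℝ u x‖ ^ 2 ∂μ := by
  have : Nontrivial E := nontrivial_of_finrank_eq_succ hE
  have hDu : Continuous (fderiv ℝ u) := hu.continuous_fderiv one_ne_zero
  obtain ⟨R, hR⟩ := hsupp.isCompact.isBounded.subset_closedBall 0
  have hu0 : ∀ x, R < ‖x‖ → u x = 0 := fun x hx =>
    image_eq_zero_of_notMem_tsupport fun h => (mem_closedBall_zero_iff.1 (hR h)).not_gt hx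
  have hmeas : Measurable fun x : E => ‖x‖⁻¹ ^ 2 * ‖u x‖ ^ 2 :=
    (measurable_norm.inv.pow_const 2).mul (hu.continuous.norm.pow 2).measurable
  have hDu_supp : HasCompactSupport fun x => ‖fderiv ℝ u x‖ ^ 2 :=
    (hsupp.fderiv (𝕜 := ℝ)).comp_left (g := fun L => ‖L‖ ^ 2) (by simp)
  have hDu_int : Integrable (fun x => ‖fderiv ℝ u x‖ ^ 2) μ :=
    (hDu.norm.pow 2).integrable_of_hasCompactSupport hDu_supp
  refine integral_le_mul_integral_of_lintegral_le (by positivity)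
    (ae_of_all _ fun x => by positivity) hmeas.aestronglyMeasurable hDu_int
    (ae_of_all _ fun x => by positivity) ?_
  have hDu_meas : Measurable fun x => ENNReal.ofReal (‖fderiv ℝ u x‖ ^ 2) :=
    (hDu.norm.pow 2).measurable.ennreal_ofReal
  rw [lintegral_eq_lintegral_sphere_lintegral_Ioi μ hmeas.ennreal_ofReal,
    lintegral_eq_lintegral_sphere_lintegral_Ioi μ hDu_meas, hE, show k + 3 - 1 = k + 2 from rfl,
    ← lintegral_const_mul' _ _ ENNReal.ofReal_ne_top]
  exact lintegral_mono fun ω =>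
    lintegral_Ioi_inv_norm_sq_mul_norm_sq_smul_le k hu hu0 (norm_eq_of_mem_sphere ω)

theorem sqrt_integral_inv_norm_sq_mul_norm_sq_le {ι : Type*} [Fintype ι] [DecidableEq ι] {k : ℕ}
    (hι : Fintype.card ι = k + 3) {u : EuclideanSpace ℝ ι → F} (hu : ContDiff ℝ 1 u)
    (hsupp : HasCompactSupport u) :
    √(∫ x, ‖x‖⁻¹ ^ 2 * ‖u x‖ ^ 2) ≤
      2 / (k + 1) * ∑ i, √(∫ x, ‖fderiv ℝ u x (EuclideanSpace.single i 1)‖ ^ 2) := by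
  have hpartial_int : ∀ i, Integrable fun x => ‖fderiv ℝ u x (EuclideanSpace.single i 1)‖ ^ 2 :=
    fun i => by
      have hc : Continuous fun x => ‖fderiv ℝ u x (EuclideanSpace.single i 1)‖ ^ 2 :=
        ((hu.continuous_fderiv one_ne_zero).clm_apply continuous_const).norm.pow 2
      have hs : HasCompactSupport fun x => ‖fderiv ℝ u x (EuclideanSpace.single i 1)‖ ^ 2 :=
        (hsupp.fderiv_apply (𝕜 := ℝ) _).comp_left (g := fun v : F => ‖v‖ ^ 2) (by simp)
      exact hc.integrable_of_hasCompactSupport hs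
  have hgrad : ∀ x, ‖fderiv ℝ u x‖ ^ 2 ≤ ∑ i, ‖fderiv ℝ u x (EuclideanSpace.single i 1)‖ ^ 2 :=
    fun x => by
      simpa using (EuclideanSpace.basisFun ι ℝ).opNorm_sq_le_sum_norm_apply_sq (fderiv ℝ u x)
  calc √(∫ x, ‖x‖⁻¹ ^ 2 * ‖u x‖ ^ 2)
      ≤ √((2 / (k + 1)) ^ 2 * ∫ x, ‖fderiv ℝ u x‖ ^ 2) :=
        Real.sqrt_le_sqrt (integral_inv_norm_sq_mul_norm_sq_le volume (by simp [hι]) hu hsupp)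
    _ ≤ √((2 / (k + 1)) ^ 2 * ∑ i, ∫ x, ‖fderiv ℝ u x (EuclideanSpace.single i 1)‖ ^ 2) := by
        rw [← integral_finsetSum _ fun i _ => hpartial_int i]
        refine Real.sqrt_le_sqrt (mul_le_mul_of_nonneg_left ?_ (by positivity))
        exact integral_mono_of_nonneg (ae_of_all _ fun x => by positivity)
          (integrable_finsetSum _ fun i _ => hpartial_int i) (ae_of_all _ hgrad)
    _ = 2 / (k + 1) * √(∑ i, ∫ x, ‖fderiv ℝ u x (EuclideanSpace.single i 1)‖ ^ 2) := by
        rw [Real.sqrt_mul (by positivity), Real.sqrt_sq (by positivity)]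
    _ ≤ 2 / (k + 1) * ∑ i, √(∫ x, ‖fderiv ℝ u x (EuclideanSpace.single i 1)‖ ^ 2) := by
        gcongr
        exact Real.sqrt_sum_le_sum_sqrt _ fun i _ => integral_nonneg fun x => by positivity

end Hardy

theorem hasFDerivAt_sqrt_sq_add_norm_sq {E : Type*} [NormedAddCommGroup E] [InnerProductSpace ℝ E]
    {τ : ℝ} (hτ : τ ≠ 0) (x : E) :
    HasFDerivAt (fun x : E => √(τ ^ 2 + ‖x‖ ^ 2)) ((√(τ ^ 2 + ‖x‖ ^ 2))⁻¹ • innerSL ℝ x) x := by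
  have h := (Real.hasDerivAt_sqrt (by positivity : τ ^ 2 + ‖x‖ ^ 2 ≠ 0)).comp_hasFDerivAt x
    ((hasStrictFDerivAt_norm_sq x).hasFDerivAt.const_add (τ ^ 2))
  refine h.congr_fderiv (ContinuousLinearMap.ext fun v => ?_)
  simp only [smul_apply, innerSL_apply_apply]
  field_simp
  ring

theorem fderiv_comp_hyperboloid_single {φ : ℝ × Spc → ℂ} {τ : ℝ} (hτ : τ ≠ 0) {x : Spc}
    (hφ : DifferentiableAt ℝ φ (√(τ ^ 2 + ‖x‖ ^ 2), x)) (i : Fin 3) :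
    fderiv ℝ (fun x : Spc => φ (√(τ ^ 2 + ‖x‖ ^ 2), x)) x (EuclideanSpace.single i 1) =
      (√(τ ^ 2 + ‖x‖ ^ 2) : ℂ)⁻¹ * Lb i φ (√(τ ^ 2 + ‖x‖ ^ 2), x) := by
  have h : HasFDerivAt (fun x : Spc => φ (√(τ ^ 2 + ‖x‖ ^ 2), x)) _ x :=
    HasFDerivAt.comp (f := fun x : Spc => (√(τ ^ 2 + ‖x‖ ^ 2), x)) x hφ.hasFDerivAt
      ((hasFDerivAt_sqrt_sq_add_norm_sq hτ x).prodMk (hasFDerivAt_id x))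
  rw [h.fderiv]
  set t := √(τ ^ 2 + ‖x‖ ^ 2)
  have ht : (t : ℂ) ≠ 0 := Complex.ofReal_ne_zero.2 (by positivity)
  have hdir :
      ((t⁻¹ • innerSL ℝ x).prod (ContinuousLinearMap.id ℝ Spc)) (EuclideanSpace.single i 1) =
      (t⁻¹ * x i) • ((1 : ℝ), (0 : Spc)) + ((0 : ℝ), EuclideanSpace.single i 1) := by
    simp [EuclideanSpace.inner_single_right]
  rw [ContinuousLinearMap.comp_apply, hdir, map_add, map_smul, Complex.real_smul, Lb, dtD, dxD]
  push_cast
  field_simp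
  ring

/-- Hardy-type inequality on hyperboloids. -/
theorem stmt1 :
    ∃ C > (0 : ℝ), ∀ φ : ℝ × Spc → ℂ, ContDiff ℝ (⊤ : ℕ∞) φ →
      (∀ (t : ℝ) (x : Spc), t - 1 ≤ ‖x‖ → φ (t, x) = 0) →
      ∀ τ : ℝ, 2 ≤ τ →
        (∫ x : Spc, ‖x‖⁻¹ ^ 2 * ‖φ (Real.sqrt (τ ^ 2 + ‖x‖ ^ 2), x)‖ ^ 2) ^ ((1 : ℝ) / 2) ≤
          C * ∑ i : Fin 3,
            (∫ x : Spc, (τ ^ 2 + ‖x‖ ^ 2)⁻¹ *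
              ‖Lb i φ (Real.sqrt (τ ^ 2 + ‖x‖ ^ 2), x)‖ ^ 2) ^ ((1 : ℝ) / 2) := by
  refine ⟨2, two_pos, fun φ hφ hsupp τ hτ => ?_⟩
  have hτ0 : τ ≠ 0 := by positivity
  have hφ1 : ContDiff ℝ 1 φ := hφ.of_le (by exact_mod_cast le_top)
  set u : Spc → ℂ := fun x => φ (√(τ ^ 2 + ‖x‖ ^ 2), x)
  have hu : ContDiff ℝ 1 u :=
    hφ1.comp (((contDiff_const.add (contDiff_norm_sq ℝ)).sqrt fun x => by positivity).prodMk
      contDiff_id)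
  -- on `Σ_τ`, the cone condition `|x| ≥ t - 1` reads `|x| ≥ (τ² - 1) / 2`
  have hu_supp : HasCompactSupport u := HasCompactSupport.intro
    (isCompact_closedBall (0 : Spc) ((τ ^ 2 - 1) / 2)) fun x hx => hsupp _ _ <| by
      have : (τ ^ 2 - 1) / 2 < ‖x‖ := by simpa using hx
      have : √(τ ^ 2 + ‖x‖ ^ 2) ≤ ‖x‖ + 1 := (Real.sqrt_le_left (by positivity)).2 (by nlinarith)
      linarith
  have hpartial : ∀ i x, ‖fderiv ℝ u x (EuclideanSpace.single i 1)‖ ^ 2 =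
      (τ ^ 2 + ‖x‖ ^ 2)⁻¹ * ‖Lb i φ (√(τ ^ 2 + ‖x‖ ^ 2), x)‖ ^ 2 := fun i x => by
    rw [fderiv_comp_hyperboloid_single hτ0 (hφ1.differentiable one_ne_zero _), norm_mul, mul_pow,
      norm_inv, Complex.norm_real, Real.norm_of_nonneg (Real.sqrt_nonneg _), inv_pow,
      Real.sq_sqrt (by positivity)]
  have hHardy := sqrt_integral_inv_norm_sq_mul_norm_sq_le (k := 0) (by simp) hu hu_supp
  simp only [← Real.sqrt_eq_rpow]
  simpa only [hpartial, CharP.cast_eq_zero, zero_add, div_one] using hHardy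

end
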